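/- Let M be a simple and cosimple matroid and let (X,Y) be a 2-separation of M. Then fcl(X) ≠ E(M) and fcl(Y) ≠ E(M); moreover (fcl(X), Y − fcl(X)) is also a 2-separation of M. -/

import Mathlib

open Set Matroid

namespace PaperFormal

variable {α : Type*} {β : Type*}

/-- The (ℤ-valued) rank of a set in a matroid: the supremum of cardinalities of
independent subsets. -/
noncomputable def rk (M : Matroid α) (X : Set α) : ℤ :=
  (sSup {n : ℕ | ∃ I, I ⊆ X ∧ M.Indep I ∧ I.ncard = n} : ℕ)

/-- Local connectivity `⊓(X,Y) = r(X) + r(Y) − r(X ∪ Y)`. -/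
noncomputable def lconn (M : Matroid α) (X Y : Set α) : ℤ :=
  rk M X + rk M Y - rk M (X ∪ Y)

/-- The connectivity function `λ(X) = r(X) + r(E − X) − r(M)`. -/
noncomputable def lam (M : Matroid α) (X : Set α) : ℤ :=
  rk M X + rk M (M.E \ X) - rk M M.E

/-- A circuit: a minimal dependent set. -/
def IsCircuitP (M : Matroid α) (C : Set α) : Prop :=
  M.Dep C ∧ ∀ D ⊂ C, M.Indep D

/-- A triangle: a 3-element circuit. -/
def IsTriangleP (M : Matroid α) (T : Set α) : Prop :=
  IsCircuitP M T ∧ T.ncard = 3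

/-- A triad: a 3-element cocircuit. -/
def IsTriadP (M : Matroid α) (T : Set α) : Prop :=
  IsCircuitP M✶ T ∧ T.ncard = 3

/-- A `k`-separation: a partition `(X, E − X)` with `λ(X) < k` and both sides of
size at least `k`. -/
def IsKSepP (M : Matroid α) (k : ℕ) (X : Set α) : Prop :=
  X ⊆ M.E ∧ lam M X ≤ (k : ℤ) - 1 ∧ (k : ℤ) ≤ X.ncard ∧ (k : ℤ) ≤ (M.E \ X).ncard

/-- `M` is 3-connected if it has no `k`-separations for `k < 3`. -/
def ThreeConnectedP (M : Matroid α) : Prop :=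
  ∀ k : ℕ, k < 3 → ∀ X : Set α, ¬ IsKSepP M k X

/-- Deletion of a set of elements. -/
def PDelete (M : Matroid α) (D : Set α) : Matroid α := M ↾ (M.E \ D)

/-- Contraction of a set of elements. -/
def PContract (M : Matroid α) (C : Set α) : Matroid α := (PDelete M✶ C)✶

/-- `N` is a minor of `M`. -/
def IsMinorP (N M : Matroid α) : Prop :=
  ∃ C D, Disjoint C D ∧ C ⊆ M.E ∧ D ⊆ M.E ∧ N = PDelete (PContract M C) D

/-- `M` is (isomorphic to) the uniform matroid `U_{a,b}`. -/
def IsUnifP (a b : ℕ) (M : Matroid α) : Prop :=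
  M.E.Finite ∧ M.E.ncard = b ∧ ∀ I ⊆ M.E, (M.Indep I ↔ I.ncard ≤ a)

/-- `M` has a minor isomorphic to `U_{a,b}`. -/
def HasUnifMinorP (M : Matroid α) (a b : ℕ) : Prop :=
  ∃ N, IsMinorP N M ∧ IsUnifP a b N

/-- `M` has a minor isomorphic to `U_{2,5}` or `U_{3,5}`. -/
def HasU25U35MinorP (M : Matroid α) : Prop :=
  HasUnifMinorP M 2 5 ∨ HasUnifMinorP M 3 5

/-- `M` is fragile with respect to the (isomorphism-closed) property `P` of matroids:
`M` has a minor satisfying `P`, and no element is flexible. -/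
def FragileFor (M : Matroid α) (P : Matroid α → Prop) : Prop :=
  (∃ N, IsMinorP N M ∧ P N) ∧
    ∀ e ∈ M.E,
      ¬((∃ N, IsMinorP N (PDelete M {e}) ∧ P N) ∧ (∃ N, IsMinorP N (PContract M {e}) ∧ P N))


/-- `M` is simple: every subset of the ground set with at most two elements is independent. -/
def SimpleP (M : Matroid α) : Prop :=
  ∀ X ⊆ M.E, X.ncard ≤ 2 → M.Indep X

/-- The full closure of `X`: the intersection of all sets containing `X` that are
closed in both `M` and `M✶`. -/
def fclP (M : Matroid α) (X : Set α) : Set α :=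
  ⋂₀ {Z | X ⊆ Z ∧ Z ⊆ M.E ∧ M.closure Z ⊆ Z ∧ M✶.closure Z ⊆ Z}

section Aux

variable {M : Matroid α} {I J X Y Z A : Set α} {e : α}

lemma rk_eq_ncard_of_basis' [M.Finite] (hI : M.IsBasis' I X) : rk M X = (I.ncard : ℤ) := by
  have hub : ∀ n ∈ {n : ℕ | ∃ J, J ⊆ X ∧ M.Indep J ∧ J.ncard = n}, n ≤ I.ncard := by
    rintro n ⟨J, hJX, hJ, rfl⟩
    obtain ⟨J', hJ', hJJ'⟩ := hJ.subset_isBasis'_of_subset hJX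
    have h1 : (M ↾ X).IsBase J' := isBase_restrict_iff'.mpr hJ'
    have h2 : (M ↾ X).IsBase I := isBase_restrict_iff'.mpr hI
    have hfin : J'.Finite := M.ground_finite.subset hJ'.indep.subset_ground
    calc J.ncard ≤ J'.ncard := Set.ncard_le_ncard hJJ' hfin
      _ = I.ncard := h1.ncard_eq_ncard_of_isBase h2
  have hmem : I.ncard ∈ {n : ℕ | ∃ J, J ⊆ X ∧ M.Indep J ∧ J.ncard = n} :=
    ⟨I, hI.subset, hI.indep, rfl⟩
  have : sSup {n : ℕ | ∃ J, J ⊆ X ∧ M.Indep J ∧ J.ncard = n} = I.ncard :=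
    le_antisymm (csSup_le ⟨_, hmem⟩ hub) (le_csSup ⟨I.ncard, hub⟩ hmem)
  simp [rk, this]

lemma rk_indep [M.Finite] (hI : M.Indep I) : rk M I = (I.ncard : ℤ) :=
  rk_eq_ncard_of_basis' hI.isBasis_self.isBasis'

lemma indep_ncard_le_rk [M.Finite] (hJ : M.Indep J) (hJX : J ⊆ X) :
    (J.ncard : ℤ) ≤ rk M X := by
  obtain ⟨I, hI⟩ := M.exists_isBasis' X
  rw [rk_eq_ncard_of_basis' hI]
  obtain ⟨J', hJ', hJJ'⟩ := hJ.subset_isBasis'_of_subset hJX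
  have h1 : (M ↾ X).IsBase J' := isBase_restrict_iff'.mpr hJ'
  have h2 : (M ↾ X).IsBase I := isBase_restrict_iff'.mpr hI
  have hfin : J'.Finite := M.ground_finite.subset hJ'.indep.subset_ground
  have : J.ncard ≤ I.ncard := by
    calc J.ncard ≤ J'.ncard := Set.ncard_le_ncard hJJ' hfin
      _ = I.ncard := h1.ncard_eq_ncard_of_isBase h2
  exact_mod_cast this

lemma rk_mono [M.Finite] (hXY : X ⊆ Y) : rk M X ≤ rk M Y := by
  obtain ⟨I, hI⟩ := M.exists_isBasis' X
  rw [rk_eq_ncard_of_basis' hI]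
  exact indep_ncard_le_rk hI.indep (hI.subset.trans hXY)

lemma rk_nonneg (M : Matroid α) (X : Set α) : 0 ≤ rk M X := Int.natCast_nonneg _

lemma rk_closure_eq [M.Finite] (X : Set α) : rk M (M.closure X) = rk M X := by
  obtain ⟨I, hI⟩ := M.exists_isBasis' X
  have hI' : M.IsBasis I (M.closure X) := hI.isBasis_closure_right
  rw [rk_eq_ncard_of_basis' hI, rk_eq_ncard_of_basis' hI'.isBasis']

lemma rk_insert_of_mem_closure [M.Finite] (hX : X ⊆ M.E) (he : e ∈ M.closure X) :
    rk M (insert e X) = rk M X := by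
  refine le_antisymm ?_ (rk_mono (subset_insert _ _))
  have h1 : insert e X ⊆ M.closure X := insert_subset he (M.subset_closure X hX)
  calc rk M (insert e X) ≤ rk M (M.closure X) := rk_mono h1
    _ = rk M X := rk_closure_eq X

lemma rk_dual_eq [M.Finite] (hA : A ⊆ M.E) :
    rk M✶ A = (A.ncard : ℤ) + rk M (M.E \ A) - rk M M.E := by
  obtain ⟨I, hI⟩ := M.exists_isBasis (M.E \ A) diff_subset
  obtain ⟨B, hB, hIB⟩ := hI.indep.subset_isBasis_of_subset (hI.subset.trans diff_subset)
  have hBbase : M.IsBase B := isBasis_ground_iff.mp hB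
  have hBE : B ⊆ M.E := hBbase.subset_ground
  have hBA : B ∩ (M.E \ A) = I := by
    refine (hI.eq_of_subset_indep (hBbase.indep.subset inter_subset_left)
      (subset_inter hIB hI.subset) inter_subset_right).symm
  have hdual : M✶.IsBasis ((M.E \ B) ∩ (M.E \ (M.E \ A))) (M.E \ (M.E \ A)) := by
    refine hBbase.compl_inter_isBasis_of_inter_isBasis ?_
    rw [hBA]; exact hI
  rw [diff_diff_cancel_left hA] at hdual
  have hEfin : M.E.Finite := M.ground_finite
  have hAfin : A.Finite := hEfin.subset hA
  have hBfin : B.Finite := hEfin.subset hBE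
  -- rewrite the three ranks
  have h1 : rk M✶ A = (((M.E \ B) ∩ A).ncard : ℤ) := rk_eq_ncard_of_basis' hdual.isBasis'
  have h2 : rk M (M.E \ A) = (I.ncard : ℤ) := rk_eq_ncard_of_basis' hI.isBasis'
  have h3 : rk M M.E = (B.ncard : ℤ) := rk_eq_ncard_of_basis' hB.isBasis'
  have hAB : (M.E \ B) ∩ A = A \ B := by
    ext x; simp only [mem_inter_iff, mem_diff]
    exact ⟨fun h => ⟨h.2, h.1.2⟩, fun h => ⟨⟨hA h.1, h.2⟩, h.1⟩⟩
  have hBA' : B ∩ (M.E \ A) = B \ A := by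
    ext x; simp only [mem_inter_iff, mem_diff]
    exact ⟨fun h => ⟨h.1, h.2.2⟩, fun h => ⟨h.1, hBE h.1, h.2⟩⟩
  have c1 : (A ∩ B).ncard + (A \ B).ncard = A.ncard :=
    Set.ncard_inter_add_ncard_diff_eq_ncard A B hAfin
  have c2 : (B ∩ A).ncard + (B \ A).ncard = B.ncard :=
    Set.ncard_inter_add_ncard_diff_eq_ncard B A hBfin
  have hcomm : (A ∩ B).ncard = (B ∩ A).ncard := by rw [inter_comm]
  rw [h1, h2, h3, hAB, ← hBA, hBA']
  push_cast [← c1, ← c2, hcomm]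
  ring

lemma rk_empty (M : Matroid α) [M.Finite] : rk M ∅ = 0 := by
  simpa using rk_indep M.empty_indep

lemma lam_dual [M.Finite] (hA : A ⊆ M.E) : lam M✶ A = lam M A := by
  have hEA : M.E \ A ⊆ M.E := diff_subset
  have h1 := rk_dual_eq (M := M) hA
  have h2 := rk_dual_eq (M := M) hEA
  have h3 := rk_dual_eq (M := M) (Subset.rfl : M.E ⊆ M.E)
  have hcc : M.E \ (M.E \ A) = A := diff_diff_cancel_left hA
  have hcount : (M.E \ A).ncard + A.ncard = M.E.ncard :=
    Set.ncard_diff_add_ncard_of_subset hA M.ground_finite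
  rw [diff_self, rk_empty] at h3
  rw [hcc] at h2
  rw [lam, lam, dual_ground, h1, h2, h3]
  push_cast [← hcount]
  ring

lemma lam_insert_le_of_mem_closure [M.Finite] (hZ : Z ⊆ M.E) (he : e ∈ M.closure Z) :
    lam M (insert e Z) ≤ lam M Z := by
  have h1 : rk M (insert e Z) = rk M Z := rk_insert_of_mem_closure hZ he
  have h2 : rk M (M.E \ insert e Z) ≤ rk M (M.E \ Z) :=
    rk_mono (diff_subset_diff_right (subset_insert _ _))
  rw [lam, lam, h1]; linarith

lemma lam_insert_le [M.Finite] (hZ : Z ⊆ M.E)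
    (he : e ∈ M.closure Z ∪ M✶.closure Z) : lam M (insert e Z) ≤ lam M Z := by
  rcases he with he | he
  · exact lam_insert_le_of_mem_closure hZ he
  · have heE : e ∈ M.E := by
      have := M✶.closure_subset_ground Z he; rwa [dual_ground] at this
    have hZ' : Z ⊆ M✶.E := by rwa [dual_ground]
    have h := lam_insert_le_of_mem_closure (M := M✶) hZ' he
    rwa [lam_dual (insert_subset heE hZ), lam_dual hZ] at h

lemma lam_of_compl_ncard_two [M.Finite] (hs : SimpleP M) (hcs : SimpleP M✶)
    (hZ : Z ⊆ M.E) (h2 : (M.E \ Z).ncard = 2) : lam M Z = 2 := by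
  obtain ⟨e, f, hef, hEZ⟩ := Set.ncard_eq_two.mp h2
  have hsub : ({e, f} : Set α) ⊆ M.E := by
    rw [← hEZ]; exact diff_subset
  have hpair : ({e, f} : Set α).ncard = 2 := Set.ncard_pair hef
  have hind : M.Indep {e, f} := hs _ hsub (by rw [hpair])
  have hind' : M✶.Indep {e, f} := hcs _ (by rwa [dual_ground]) (by rw [hpair])
  have hr1 : rk M (M.E \ Z) = 2 := by
    rw [hEZ, rk_indep hind, hpair]; norm_num
  have hr2 : rk M✶ ({e, f} : Set α) = 2 := by
    rw [rk_indep hind', hpair]; norm_num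
  have hd := rk_dual_eq (M := M) hsub
  have hcc : M.E \ ({e, f} : Set α) = Z := by
    rw [← hEZ, diff_diff_cancel_left hZ]
  rw [hcc, hpair, hr2] at hd
  have hrZ : rk M Z = rk M M.E := by push_cast at hd; linarith
  rw [lam, hrZ, hr1]; ring

lemma subset_fclP (hX : X ⊆ M.E) : X ⊆ fclP M X := by
  intro a ha
  exact mem_sInter.mpr fun Z hZ => hZ.1 ha

lemma fclP_subset_ground (hX : X ⊆ M.E) : fclP M X ⊆ M.E :=
  sInter_subset_of_mem ⟨hX, Subset.rfl, M.closure_subset_ground _, by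
    have := M✶.closure_subset_ground M.E
    rwa [dual_ground] at this⟩

lemma closure_fclP_subset (M : Matroid α) (X : Set α) :
    M.closure (fclP M X) ⊆ fclP M X := by
  intro a ha
  refine mem_sInter.mpr fun Z hZ => hZ.2.2.1 ?_
  exact M.closure_subset_closure (sInter_subset_of_mem hZ) ha

lemma dual_closure_fclP_subset (M : Matroid α) (X : Set α) :
    M✶.closure (fclP M X) ⊆ fclP M X := by
  intro a ha
  refine mem_sInter.mpr fun Z hZ => hZ.2.2.2 ?_
  exact M✶.closure_subset_closure (sInter_subset_of_mem hZ) ha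

lemma key_induction (M : Matroid α) [M.Finite] (hs : SimpleP M) (hcs : SimpleP M✶)
    {X : Set α} (hX : X ⊆ M.E) :
    ∀ n (Z : Set α), X ⊆ Z → Z ⊆ fclP M X → (fclP M X \ Z).ncard ≤ n →
      lam M Z ≤ 1 → 2 ≤ (M.E \ Z).ncard →
      lam M (fclP M X) ≤ 1 ∧ 2 ≤ (M.E \ fclP M X).ncard := by
  have hEfin : M.E.Finite := M.ground_finite
  have hFfin : (fclP M X).Finite := hEfin.subset (fclP_subset_ground hX)
  intro n
  induction n with
  | zero =>
    intro Z hXZ hZF hcard hlam h2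
    have hempty : fclP M X \ Z = ∅ := by
      have : (fclP M X \ Z).ncard = 0 := Nat.le_zero.mp hcard
      exact (Set.ncard_eq_zero (hFfin.subset diff_subset)).mp this
    have hFZ : fclP M X = Z := subset_antisymm (diff_eq_empty.mp hempty) hZF
    rw [hFZ]; exact ⟨hlam, h2⟩
  | succ n ih =>
    intro Z hXZ hZF hcard hlam h2
    have hZE : Z ⊆ M.E := hZF.trans (fclP_subset_ground hX)
    by_cases hcl : M.closure Z ⊆ Z ∧ M✶.closure Z ⊆ Z
    · have hFsub : fclP M X ⊆ Z := sInter_subset_of_mem ⟨hXZ, hZE, hcl.1, hcl.2⟩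
      have hFZ : fclP M X = Z := subset_antisymm hFsub hZF
      rw [hFZ]; exact ⟨hlam, h2⟩
    · have hex : ∃ e, e ∈ (M.closure Z ∪ M✶.closure Z) ∧ e ∉ Z := by
        by_contra hno
        push_neg at hno
        exact hcl ⟨fun a ha => by_contra fun h => (h (hno a (Or.inl ha))),
          fun a ha => by_contra fun h => (h (hno a (Or.inr ha)))⟩
      obtain ⟨e, heU, heZ⟩ := hex
      have heE : e ∈ M.E := by
        rcases heU with h | h
        · exact M.closure_subset_ground Z h
        · have := M✶.closure_subset_ground Z h; rwa [dual_ground] at this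
      have heF : e ∈ fclP M X := by
        rcases heU with h | h
        · exact closure_fclP_subset M X (M.closure_subset_closure hZF h)
        · exact dual_closure_fclP_subset M X (M✶.closure_subset_closure hZF h)
      have hlam' : lam M (insert e Z) ≤ 1 := (lam_insert_le hZE heU).trans hlam
      have h2ne : (M.E \ Z).ncard ≠ 2 := by
        intro hh
        have := lam_of_compl_ncard_two hs hcs hZE hh
        omega
      have h3 : 3 ≤ (M.E \ Z).ncard := by omega
      have heEZ : e ∈ M.E \ Z := ⟨heE, heZ⟩
      have hd1 : (M.E \ insert e Z) = (M.E \ Z) \ {e} := by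
        rw [diff_diff, union_singleton]
      have h2' : 2 ≤ (M.E \ insert e Z).ncard := by
        rw [hd1, Set.ncard_diff_singleton_of_mem heEZ]
        omega
      have heFZ : e ∈ fclP M X \ Z := ⟨heF, heZ⟩
      have hd2 : (fclP M X \ insert e Z) = (fclP M X \ Z) \ {e} := by
        rw [diff_diff, union_singleton]
      have hcard' : (fclP M X \ insert e Z).ncard ≤ n := by
        have hpos : 0 < (fclP M X \ Z).ncard :=
          (Set.ncard_pos (hFfin.subset diff_subset)).mpr ⟨e, heFZ⟩
        rw [hd2, Set.ncard_diff_singleton_of_mem heFZ]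
        omega
      exact ih (insert e Z) (hXZ.trans (subset_insert _ _))
        (insert_subset heF hZF) hcard' hlam' h2'

end Aux

/-- In a simple, cosimple matroid, if `(X,Y)` is a 2-separation then
neither full closure is all of `E(M)`, and `(fcl(X), Y − fcl(X))` is a 2-separation. -/
theorem stmt5 (M : Matroid α) [M.Finite] (hs : SimpleP M) (hcs : SimpleP M✶)
    (X Y : Set α) (hdisj : Disjoint X Y) (hU : X ∪ Y = M.E)
    (hsep : IsKSepP M 2 X) :
    fclP M X ≠ M.E ∧ fclP M Y ≠ M.E ∧
      IsKSepP M 2 (fclP M X) ∧ M.E \ fclP M X = Y \ fclP M X := by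
  obtain ⟨hXE, hlamX', hX2, hXc2⟩ := hsep
  have hlamX : lam M X ≤ 1 := by push_cast at hlamX'; linarith
  have hEfin : M.E.Finite := M.ground_finite
  have hYE : Y ⊆ M.E := by rw [← hU]; exact subset_union_right
  have hEX : M.E \ X = Y := by
    rw [← hU, union_diff_left, hdisj.sdiff_eq_right]
  have hEY : M.E \ Y = X := by
    rw [← hU, union_diff_right, hdisj.sdiff_eq_left]
  have hlamY : lam M Y ≤ 1 := by
    have : lam M Y = lam M X := by rw [lam, lam, hEX, hEY]; ring
    rw [this]; exact hlamX
  -- numeric ncard versions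
  have hX2' : 2 ≤ X.ncard := by exact_mod_cast hX2
  have hXc2' : 2 ≤ (M.E \ X).ncard := by exact_mod_cast hXc2
  have hYc2' : 2 ≤ (M.E \ Y).ncard := by rw [hEY]; exact hX2'
  have hY2' : 2 ≤ Y.ncard := by rw [← hEX]; exact hXc2'
  -- apply the key induction to X and Y
  obtain ⟨hFlam, hF2⟩ := key_induction M hs hcs hXE ((fclP M X \ X).ncard) X
    Subset.rfl (subset_fclP hXE) le_rfl hlamX hXc2'
  obtain ⟨_, hG2⟩ := key_induction M hs hcs hYE ((fclP M Y \ Y).ncard) Y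
    Subset.rfl (subset_fclP hYE) le_rfl hlamY hYc2'
  have hFE : fclP M X ⊆ M.E := fclP_subset_ground hXE
  have hFne : fclP M X ≠ M.E := by
    intro h; rw [h] at hF2; simp at hF2
  have hGne : fclP M Y ≠ M.E := by
    intro h; rw [h] at hG2; simp at hG2
  refine ⟨hFne, hGne, ⟨hFE, by push_cast; linarith, ?_, ?_⟩, ?_⟩
  · have : X.ncard ≤ (fclP M X).ncard :=
      Set.ncard_le_ncard (subset_fclP hXE) (hEfin.subset hFE)
    push_cast
    omega
  · push_cast
    omega
  · rw [← hU, union_diff_distrib, diff_eq_empty.mpr (subset_fclP hXE), empty_union]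

end PaperFormal
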